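/- arXiv:2301.06197 — 4 statements merged into one kernel-verified Lean document; each statement's English description precedes it below -/
import Mathlib

section
/- If a dataset {(x_i, y_i)} admits an intersection of two halfspaces with zero classification error, then the augmented dataset {(x_i, y_i, h_i)} with h_i = 0 for all i admits a classifier-rejector pair of halfspaces with zero deferral system error. -/
/-- A halfspace predictor: x ↦ 1[w·x + b > 0]. -/
def IsHalfspace {d : ℕ} (g : (Fin d → ℝ) → Bool) : Prop :=
  ∃ (w : Fin d → ℝ) (b : ℝ), ∀ x, g x = decide (0 < ∑ j, w j * x j + b)

/-- If the dataset is realizable by an intersection of two halfspaces, then with the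
always-zero human the augmented dataset admits a classifier-rejector pair of halfspaces
with zero deferral system error. -/
theorem stmt2 {d : ℕ} (n : ℕ) (x : Fin n → (Fin d → ℝ)) (y h : Fin n → Bool)
    (hh : ∀ i, h i = false)
    (hreal : ∃ g1 g2 : (Fin d → ℝ) → Bool, IsHalfspace g1 ∧ IsHalfspace g2 ∧
      (1 / (n : ℝ)) * ∑ i, (if (g1 (x i) && g2 (x i)) ≠ y i then (1 : ℝ) else 0) = 0) :
    ∃ m r : (Fin d → ℝ) → Bool, IsHalfspace m ∧ IsHalfspace r ∧
      (1 / (n : ℝ)) * ∑ i,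
        ((if r (x i) = true then (1 : ℝ) else 0) * (if h i ≠ y i then 1 else 0)
          + (if r (x i) = false then (1 : ℝ) else 0) * (if m (x i) ≠ y i then 1 else 0)) = 0 := by
  rcases Nat.eq_zero_or_pos n with hn | hn
  · subst hn
    refine ⟨fun _ => false, fun _ => false, ⟨0, 0, by simp⟩, ⟨0, 0, by simp⟩, by simp⟩
  obtain ⟨g1, g2, hs1, ⟨w2, b2, hw2⟩, hsum⟩ := hreal
  have hn' : (n : ℝ) ≠ 0 := Nat.cast_ne_zero.mpr hn.ne'
  -- per-point correctness
  have hpt : ∀ i, (g1 (x i) && g2 (x i)) = y i := by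
    intro i
    have hz : ∑ i, (if (g1 (x i) && g2 (x i)) ≠ y i then (1 : ℝ) else 0) = 0 :=
      (mul_eq_zero.mp hsum).resolve_left (one_div_ne_zero hn')
    have hnonneg : ∀ j ∈ Finset.univ,
        (0:ℝ) ≤ (if (g1 (x j) && g2 (x j)) ≠ y j then (1 : ℝ) else 0) := by
      intro j _; positivity
    have := (Finset.sum_eq_zero_iff_of_nonneg hnonneg).mp hz i (Finset.mem_univ i)
    by_contra hne
    simp [hne] at this
  -- value of the g2 halfspace at each point
  obtain ⟨c, hcpos, hcle⟩ : ∃ c : ℝ, 0 < c ∧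
      ∀ i, 0 < ∑ j, w2 j * x i j + b2 → c ≤ ∑ j, w2 j * x i j + b2 := by
    set v : Fin n → ℝ := fun i => ∑ j, w2 j * x i j + b2 with hv
    by_cases hTne : (Finset.univ.filter (fun i => 0 < v i)).Nonempty
    · refine ⟨(Finset.univ.filter (fun i => 0 < v i)).inf' hTne v, ?_, ?_⟩
      · rw [Finset.lt_inf'_iff]
        intro i hi
        exact (Finset.mem_filter.mp hi).2
      · intro i hi
        exact Finset.inf'_le _ (Finset.mem_filter.mpr ⟨Finset.mem_univ i, hi⟩)
    · refine ⟨1, one_pos, fun i hi => absurd ?_ hTne⟩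
      exact ⟨i, Finset.mem_filter.mpr ⟨Finset.mem_univ i, hi⟩⟩
  -- the rejector: complement of g2, shifted by c/2
  refine ⟨g1, fun z => decide (0 < ∑ j, (-(w2 j)) * z j + (-b2 + c / 2)), hs1,
    ⟨fun j => -(w2 j), -b2 + c / 2, fun _ => rfl⟩, ?_⟩
  have hrval : ∀ i, (∑ j, (-(w2 j)) * x i j + (-b2 + c / 2))
      = -(∑ j, w2 j * x i j + b2) + c / 2 := by
    intro i
    simp only [neg_mul, Finset.sum_neg_distrib]
    ring
  apply mul_eq_zero_of_right
  apply Finset.sum_eq_zero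
  intro i _
  have hy := hpt i
  have hg2 := hw2 (x i)
  simp only []
  by_cases hvi : 0 < ∑ j, w2 j * x i j + b2
  · -- g2 true, r false, y = g1
    have hg2t : g2 (x i) = true := by rw [hg2]; simpa using hvi
    have hrf : decide (0 < ∑ j, (-(w2 j)) * x i j + (-b2 + c / 2)) = false := by
      rw [hrval i]
      have hle := hcle i hvi
      have : ¬ (0 < -(∑ j, w2 j * x i j + b2) + c / 2) := by linarith
      simpa using this
    have hmy : g1 (x i) = y i := by rw [← hy, hg2t, Bool.and_true]
    simp only [hrf]
    simp [hmy]
  · -- g2 false, r true, y = false = h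
    have hg2f : g2 (x i) = false := by rw [hg2]; simpa using hvi
    have hrt : decide (0 < ∑ j, (-(w2 j)) * x i j + (-b2 + c / 2)) = true := by
      rw [hrval i]
      push_neg at hvi
      have : 0 < -(∑ j, w2 j * x i j + b2) + c / 2 := by linarith
      simpa using this
    have hyf : y i = false := by rw [← hy, hg2f, Bool.and_false]
    simp only [hrt]
    simp [hyf, hh i]
end

section
/- Let g : X → R^{C+1} assign scores g_1, …, g_C, g_⊥ to each input, define m(x) = argmax_{y ∈ {1,…,C}} g_y(x), r(x) = 1[max_y g_y(x) ≤ g_⊥(x)], and for a labeled point (x, y, h) define L_RS(g, x, y, h) = −2·log₂((exp(g_y(x)) + 1[h = y]·exp(g_⊥(x))) / Σ_{y' ∈ {1,…,C,⊥}} exp(g_{y'}(x))). Then the pointwise 0-1 deferral loss 1[r(x)=1]·1[h ≠ y] + 1[r(x)=0]·1[m(x) ≠ y] is at most L_RS(g, x, y, h). -/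
open scoped Classical

/-- The pointwise 0-1 deferral loss is upper bounded by the RealizableSurrogate loss.
Here g gives the class scores at the point x, gbot the deferral score, m is any label
attaining the maximal score (the argmax classifier), and the rejector defers iff
max_y g_y ≤ gbot. -/
theorem stmt7 (C : ℕ) (g : Fin C → ℝ) (gbot : ℝ) (y h m : Fin C)
    (hm : ∀ j, g j ≤ g m) :
    (if ∀ j, g j ≤ gbot then (if h = y then (0 : ℝ) else 1)
      else (if m = y then (0 : ℝ) else 1))
      ≤ -2 * Real.logb 2 ((Real.exp (g y) + (if h = y then Real.exp gbot else 0)) /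
          (∑ j, Real.exp (g j) + Real.exp gbot)) := by
  have hb : (1:ℝ) < 2 := one_lt_two
  set N : ℝ := Real.exp (g y) + (if h = y then Real.exp gbot else 0) with hNdef
  set S : ℝ := ∑ j, Real.exp (g j) + Real.exp gbot with hSdef
  have hite0 : (0:ℝ) ≤ (if h = y then Real.exp gbot else 0) := by
    split <;> positivity
  have hiteb : (if h = y then Real.exp gbot else 0) ≤ Real.exp gbot := by
    split
    · exact le_rfl
    · positivity
  have hNpos : 0 < N := by
    have := Real.exp_pos (g y); simp only [hNdef]; linarith
  have hsum_y : Real.exp (g y) ≤ ∑ j, Real.exp (g j) :=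
    Finset.single_le_sum (f := fun j => Real.exp (g j))
      (fun i _ => (Real.exp_pos _).le) (Finset.mem_univ y)
  have hSpos : 0 < S := by
    have := Real.exp_pos gbot
    have := Real.exp_pos (g y)
    simp only [hSdef]; linarith
  have hNS : N ≤ S := by
    simp only [hNdef, hSdef]; linarith
  -- key: in the "loss = 1" cases, 3 * N ≤ 2 * S, hence 1 ≤ RHS
  have key : ∀ (_ : 3 * N ≤ 2 * S), (1:ℝ) ≤ -2 * Real.logb 2 (N / S) := by
    intro h32
    have hx : 0 < N / S := div_pos hNpos hSpos
    have hx2 : N / S ≤ 2 / 3 := by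
      rw [div_le_div_iff₀ hSpos (by norm_num)]; linarith
    have hsq : (N / S) ^ 2 ≤ (2:ℝ)⁻¹ := by
      have h1 : (N / S) ^ 2 ≤ (2/3:ℝ) ^ 2 := by
        apply pow_le_pow_left₀ hx.le hx2
      nlinarith
    have h2 : Real.logb 2 ((N / S) ^ 2) ≤ Real.logb 2 ((2:ℝ)⁻¹) :=
      Real.logb_le_logb_of_le hb (pow_pos hx 2) hsq
    rw [Real.logb_pow, Real.logb_inv, Real.logb_self_eq_one one_lt_two] at h2
    push_cast at h2
    linarith
  have hzero : (0:ℝ) ≤ -2 * Real.logb 2 (N / S) := by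
    have := Real.logb_nonpos hb (div_nonneg hNpos.le hSpos.le)
      ((div_le_one hSpos).mpr hNS)
    linarith
  by_cases hdef : ∀ j, g j ≤ gbot
  · rw [if_pos hdef]
    by_cases hhy : h = y
    · simpa [hhy] using hzero
    · simp only [hhy, if_false]
      apply key
      have h1 : Real.exp (g y) ≤ Real.exp gbot := Real.exp_le_exp.mpr (hdef y)
      simp only [hNdef, hSdef, hhy, if_false, add_zero]
      linarith
  · rw [if_neg hdef]
    by_cases hmy : m = y
    · simpa [hmy] using hzero
    · simp only [hmy, if_false]
      apply key
      push_neg at hdef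
      obtain ⟨j, hj⟩ := hdef
      have hgm : gbot < g m := lt_of_lt_of_le hj (hm j)
      have h1 : Real.exp gbot ≤ Real.exp (g m) := Real.exp_le_exp.mpr hgm.le
      have h2 : Real.exp (g y) ≤ Real.exp (g m) := Real.exp_le_exp.mpr (hm y)
      have hsum2 : Real.exp (g y) + Real.exp (g m) ≤ ∑ j, Real.exp (g j) := by
        have hsub : ({y, m} : Finset (Fin C)) ⊆ Finset.univ := Finset.subset_univ _
        have := Finset.sum_le_sum_of_subset_of_nonneg hsub
          (f := fun j => Real.exp (g j)) (fun i _ _ => (Real.exp_pos _).le)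
        rwa [Finset.sum_pair (fun hh => hmy hh.symm)] at this
      simp only [hNdef, hSdef]
      linarith
end

section
/- Let g* : X → R^{C+1} be scores inducing classifier m*(x) = argmax_y g*_y(x) and rejector r*(x) = 1[max_y g*_y(x) ≤ g*_⊥(x)], and suppose strict score separation holds: whenever r*(x)=1 the top score g*_⊥(x) strictly exceeds all g*_y(x), and whenever r*(x)=0 the score g*_{y}(x) of the true label strictly exceeds all other scores including g*_⊥(x). Then for each fixed point (x, y, h) with zero 0-1 deferral loss, the RealizableSurrogate loss of the scaled scores u·g* tends to 0 as u → ∞: lim_{u→∞} −2·log₂((exp(u·g*_y(x)) + 1[h=y]·exp(u·g*_⊥(x))) / Σ_{y'} exp(u·g*_{y'}(x))) = 0. -/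
/-!
Index all scores by `Option (Fin C)`, with `none` standing for ⊥. The numerator is then the
exponential mass of a set `T` of indices containing a score strictly larger than every score
outside `T`. After division by `exp (u * max)` the mass outside `T` decays exponentially, so the
softmax ratio tends to `1` and its logarithm to `0`.
-/

open Filter Real Topology

theorem tendsto_sum_exp_mul_div_exp_mul_atTop {ι : Type*} (s : Finset ι) (a : ι → ℝ) {M : ℝ}
    (ha : ∀ i ∈ s, a i < M) :
    Tendsto (fun u : ℝ => (∑ i ∈ s, exp (u * a i)) / exp (u * M)) atTop (𝓝 0) := by
  have hterm : ∀ i ∈ s, Tendsto (fun u : ℝ => exp (u * (a i - M))) atTop (𝓝 0) := fun i hi =>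
    tendsto_exp_atBot.comp (tendsto_id.atTop_mul_const_of_neg (sub_neg.mpr (ha i hi)))
  simpa [Finset.sum_div, ← exp_sub, mul_sub] using tendsto_finsetSum s hterm

theorem tendsto_div_add_of_tendsto_div {α : Type*} {l : Filter α} {N R : α → ℝ}
    (hN : ∀ᶠ x in l, N x ≠ 0) (hR : Tendsto (fun x => R x / N x) l (𝓝 0)) :
    Tendsto (fun x => N x / (N x + R x)) l (𝓝 1) := by
  have h : Tendsto (fun x => (1 + R x / N x)⁻¹) l (𝓝 1) := by
    simpa using (tendsto_const_nhds.add hR).inv₀ (by norm_num : (1 : ℝ) + 0 ≠ 0)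
  refine h.congr' (hN.mono fun x hx => ?_)
  rw [one_add_div hx, inv_div]

theorem tendsto_sum_exp_mul_div_sum_exp_mul_atTop {ι : Type*} [Fintype ι] (s : ι → ℝ)
    (T : Finset ι) {m : ι} (hm : m ∈ T) (hlt : ∀ i ∉ T, s i < s m) :
    Tendsto (fun u : ℝ => (∑ i ∈ T, exp (u * s i)) / ∑ i, exp (u * s i)) atTop (𝓝 1) := by
  classical
  have hN : ∀ u : ℝ, exp (u * s m) ≤ ∑ i ∈ T, exp (u * s i) := fun u =>
    Finset.single_le_sum (f := fun i => exp (u * s i)) (fun i _ => (exp_pos _).le) hm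
  have hR : Tendsto (fun u : ℝ => (∑ i ∈ Tᶜ, exp (u * s i)) / ∑ i ∈ T, exp (u * s i))
      atTop (𝓝 0) :=
    squeeze_zero (fun u => by positivity)
      (fun u => div_le_div_of_nonneg_left (by positivity) (exp_pos _) (hN u))
      (tendsto_sum_exp_mul_div_exp_mul_atTop Tᶜ s fun i hi => hlt i (Finset.mem_compl.mp hi))
  simpa only [Finset.sum_add_sum_compl] using
    tendsto_div_add_of_tendsto_div
      (Eventually.of_forall fun u => ((exp_pos _).trans_le (hN u)).ne') hR

/-- Under strict score separation and zero 0-1 deferral loss at the point, the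
RealizableSurrogate loss of the scaled scores u·g tends to 0 as u → ∞.
The first disjunct is the deferral case (⊥ score strictly maximal and the human correct),
the second the non-deferral case (the true label's score strictly maximal, including
over the ⊥ score). -/
theorem stmt10 (C : ℕ) (g : Fin C → ℝ) (gbot : ℝ) (y h : Fin C)
    (hcase : ((∀ j, g j < gbot) ∧ h = y) ∨
      ((∀ j, j ≠ y → g j < g y) ∧ gbot < g y)) :
    Filter.Tendsto (fun u : ℝ =>
        -2 * Real.logb 2 ((Real.exp (u * g y) + (if h = y then Real.exp (u * gbot) else 0)) /
          (∑ j, Real.exp (u * g j) + Real.exp (u * gbot))))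
      Filter.atTop (nhds 0) := by
  let s : Option (Fin C) → ℝ := fun o => o.elim gbot g
  let T : Finset (Option (Fin C)) := {o | o = some y ∨ (o = none ∧ h = y)}
  have hnum : ∀ u : ℝ, ∑ o ∈ T, exp (u * s o) =
      exp (u * g y) + if h = y then exp (u * gbot) else 0 := by
    intro u
    simp [T, s, Finset.sum_filter, Fintype.sum_option, add_comm]
  have hden : ∀ u : ℝ, ∑ o, exp (u * s o) = ∑ j, exp (u * g j) + exp (u * gbot) := by
    intro u
    simp [s, Fintype.sum_option, add_comm]
  obtain ⟨m, hm, hlt⟩ : ∃ m ∈ T, ∀ o ∉ T, s o < s m := by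
    rcases hcase with ⟨hlt, rfl⟩ | ⟨hlt, hbot⟩
    · refine ⟨none, by simp [T], fun o ho => ?_⟩
      cases o with
      | none => simp [T] at ho
      | some j => exact hlt j
    · refine ⟨some y, by simp [T], fun o ho => ?_⟩
      cases o with
      | none => exact hbot
      | some j => exact hlt j (by simpa [T] using ho)
  have hratio := tendsto_sum_exp_mul_div_sum_exp_mul_atTop s T hm hlt
  simp only [hnum, hden] at hratio
  simpa using ((continuousAt_logb one_ne_zero).tendsto.comp hratio).const_mul (-2 : ℝ)
end

section
/- Let G be a class of scoring functions X → R^{C+1} closed under nonnegative scaling, inducing classifier-rejector pairs (m_g, r_g) as above. Suppose there exists g* ∈ G whose induced pair (m*, r*) has zero population 0-1 deferral loss and satisfies strict score separation on the support of the data distribution. Then any minimizer ĝ of the expected RealizableSurrogate loss over G induces a pair (m̂, r̂) with zero population 0-1 deferral loss. -/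
/-!
The 0-1 deferral loss is dominated pointwise by the surrogate: whenever the induced pair errs,
the softmax mass of the correct outcomes (the true label, plus deferral if the human is right)
is at most `2/3`, and `-2 log₂ (2/3) ≥ 1`. Scaling `g*` by `t → ∞` pushes the softmax mass of
its strictly maximal, correct outcome to `1`, so the surrogate of `t • g*` tends to `0`
pointwise, boundedly by `2 log₂ (C + 1)`; dominated convergence makes its expectation tend
to `0`. A minimizer `ĝ` therefore has expected surrogate `≤ 0`, and so zero 0-1 deferral loss.
-/

open scoped Classical
open MeasureTheory

/-- The RealizableSurrogate loss of scores s (indexed by Option (Fin C), with `none` the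
deferral score ⊥) on a point with true label y and human prediction h. -/
noncomputable def rsLoss (C : ℕ) (s : Option (Fin C) → ℝ) (y h : Fin C) : ℝ :=
  -2 * Real.logb 2 ((Real.exp (s (some y)) + (if h = y then Real.exp (s none) else 0)) /
    ∑ i : Option (Fin C), Real.exp (s i))

/-- The 0-1 deferral loss of the classifier-rejector pair induced by scores s, where m is
the argmax label: defer iff all class scores are at most the ⊥ score. -/
noncomputable def zeroOneDefLoss (C : ℕ) (s : Option (Fin C) → ℝ) (m y h : Fin C) : ℝ :=
  if ∀ j : Fin C, s (some j) ≤ s none then (if h = y then 0 else 1)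
  else (if m = y then 0 else 1)

open Real Filter Topology

noncomputable def softmax {ι : Type*} [Fintype ι] (s : ι → ℝ) (i : ι) : ℝ :=
  exp (s i) / ∑ j, exp (s j)

section Softmax

variable {ι : Type*} [Fintype ι] (s : ι → ℝ)

lemma sum_exp_pos [Nonempty ι] : 0 < ∑ j, exp (s j) :=
  Finset.sum_pos (fun j _ => exp_pos (s j)) Finset.univ_nonempty

lemma softmax_pos [Nonempty ι] (i : ι) : 0 < softmax s i :=
  div_pos (exp_pos _) (sum_exp_pos s)

lemma inv_card_le_softmax {i₀ : ι} (hmax : ∀ i, s i ≤ s i₀) :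
    (Fintype.card ι : ℝ)⁻¹ ≤ softmax s i₀ := by
  have : Nonempty ι := ⟨i₀⟩
  have hsum : ∑ j, exp (s j) ≤ Fintype.card ι * exp (s i₀) := by
    simpa using Finset.sum_le_card_nsmul Finset.univ _ _ fun j _ => exp_le_exp.2 (hmax j)
  rw [softmax, le_div_iff₀ (sum_exp_pos s)]
  calc (Fintype.card ι : ℝ)⁻¹ * ∑ j, exp (s j)
      ≤ (Fintype.card ι : ℝ)⁻¹ * (Fintype.card ι * exp (s i₀)) := by gcongr
    _ = exp (s i₀) := by field_simp

lemma softmax_eq_inv_sum_exp_sub (i₀ : ι) :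
    softmax s i₀ = (∑ j, exp (s j - s i₀))⁻¹ := by
  simp only [softmax, exp_sub, ← Finset.sum_div, inv_div]

lemma tendsto_softmax_smul_atTop {i₀ : ι} (hmax : ∀ i ≠ i₀, s i < s i₀) :
    Tendsto (fun t : ℝ => softmax (t • s) i₀) atTop (𝓝 1) := by
  have hterm : ∀ j, Tendsto (fun t : ℝ => exp (t * s j - t * s i₀)) atTop
      (𝓝 (if j = i₀ then 1 else 0)) := by
    intro j
    by_cases hj : j = i₀
    · simp [hj]
    · simp only [hj, if_false, ← mul_sub]
      exact tendsto_exp_atBot.comp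
        (tendsto_id.atTop_mul_const_of_neg (sub_neg.2 (hmax j hj)))
  have hsum := tendsto_finsetSum Finset.univ fun j _ => hterm j
  rw [Finset.sum_ite_eq' Finset.univ i₀, if_pos (Finset.mem_univ _)] at hsum
  simpa [softmax_eq_inv_sum_exp_sub] using hsum.inv₀ one_ne_zero

end Softmax

section Surrogate

variable {C : ℕ} (s : Option (Fin C) → ℝ) (y h : Fin C)

noncomputable def rsMass : ℝ :=
  exp (s (some y)) + if h = y then exp (s none) else 0

lemma rsLoss_eq : rsLoss C s y h = -2 * logb 2 (rsMass s y h / ∑ i, exp (s i)) := rfl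

lemma rsMass_pos : 0 < rsMass s y h := by
  unfold rsMass
  split_ifs <;> positivity

lemma rsMass_le_sum_exp : rsMass s y h ≤ ∑ i, exp (s i) := by
  have hy : exp (s (some y)) ≤ ∑ j : Fin C, exp (s (some j)) :=
    Finset.single_le_sum (f := fun j => exp (s (some j))) (fun j _ => (exp_pos _).le)
      (Finset.mem_univ y)
  rw [rsMass, Fintype.sum_option]
  split_ifs <;> linarith [exp_pos (s none)]

lemma rsLoss_nonneg : 0 ≤ rsLoss C s y h := by
  have hp : rsMass s y h / ∑ i, exp (s i) ≤ 1 :=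
    (div_le_one (sum_exp_pos s)).2 (rsMass_le_sum_exp s y h)
  rw [rsLoss_eq]
  nlinarith [logb_nonpos one_lt_two (div_pos (rsMass_pos s y h) (sum_exp_pos s)).le hp]

lemma one_le_rsLoss_of_le (hp : rsMass s y h / ∑ i, exp (s i) ≤ 2 / 3) :
    1 ≤ rsLoss C s y h := by
  set p := rsMass s y h / ∑ i, exp (s i)
  have hp₀ : 0 < p := div_pos (rsMass_pos s y h) (sum_exp_pos s)
  -- `-2 log₂ p = -log₂ (p²)` and `p² ≤ 4/9 ≤ 1/2`
  have hsq : logb 2 (p ^ 2) ≤ logb 2 2⁻¹ :=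
    logb_le_logb_of_le one_lt_two (by positivity) (by nlinarith)
  rw [logb_pow, logb_inv, logb_self_eq_one one_lt_two] at hsq
  rw [rsLoss_eq]
  push_cast at hsq
  linarith

lemma zeroOneDefLoss_nonneg (m : Fin C) : 0 ≤ zeroOneDefLoss C s m y h := by
  unfold zeroOneDefLoss
  split_ifs <;> norm_num

lemma zeroOneDefLoss_le_rsLoss (m : Fin C) (hm : ∀ j, s (some j) ≤ s (some m)) :
    zeroOneDefLoss C s m y h ≤ rsLoss C s y h := by
  have hS := sum_exp_pos s
  unfold zeroOneDefLoss
  split_ifs with hdef hhy hmy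
  · exact rsLoss_nonneg s y h
  · refine one_le_rsLoss_of_le s y h ((div_le_iff₀ hS).2 ?_)
    have hsum := rsMass_le_sum_exp s y y
    rw [rsMass, if_pos rfl] at hsum
    have hy : exp (s (some y)) ≤ exp (s none) := exp_le_exp.2 (hdef y)
    simp only [rsMass, if_neg hhy, add_zero]
    linarith
  · exact rsLoss_nonneg s y h
  · obtain ⟨j, hj⟩ := not_forall.1 hdef
    refine one_le_rsLoss_of_le s y h ((div_le_iff₀ hS).2 ?_)
    have hpair : exp (s (some y)) + exp (s (some m)) ≤ ∑ j : Fin C, exp (s (some j)) := by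
      rw [← Finset.sum_pair (f := fun j => exp (s (some j))) (Ne.symm hmy)]
      exact Finset.sum_le_sum_of_subset_of_nonneg (Finset.subset_univ _)
        fun i _ _ => (exp_pos _).le
    have hy : exp (s (some y)) ≤ exp (s (some m)) := exp_le_exp.2 (hm y)
    have hnone : exp (s none) ≤ exp (s (some m)) :=
      exp_le_exp.2 ((not_le.1 hj).trans_le (hm j)).le
    have hmass : rsMass s y h ≤ exp (s (some y)) + exp (s none) := by
      unfold rsMass
      split_ifs <;> linarith [exp_pos (s none)]
    rw [Fintype.sum_option]
    linarith

def IsCorrect : Option (Fin C) → Prop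
  | some j => j = y
  | none => h = y

variable {s y h}

lemma exp_le_rsMass {i₀ : Option (Fin C)} (hi₀ : IsCorrect y h i₀) :
    exp (s i₀) ≤ rsMass s y h := by
  cases i₀ with
  | none =>
    simp only [IsCorrect] at hi₀
    simp only [rsMass, if_pos hi₀]
    linarith [exp_pos (s (some y))]
  | some j =>
    simp only [IsCorrect] at hi₀
    subst hi₀
    unfold rsMass
    split_ifs <;> linarith [exp_pos (s none)]

lemma rsLoss_le_neg_two_logb_softmax {i₀ : Option (Fin C)} (hi₀ : IsCorrect y h i₀) :
    rsLoss C s y h ≤ -2 * logb 2 (softmax s i₀) := by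
  have hle : softmax s i₀ ≤ rsMass s y h / ∑ i, exp (s i) :=
    div_le_div_of_nonneg_right (exp_le_rsMass hi₀) (sum_exp_pos s).le
  rw [rsLoss_eq]
  linarith [logb_le_logb_of_le one_lt_two (softmax_pos s i₀) hle]

lemma rsLoss_le_two_logb {i₀ : Option (Fin C)} (hi₀ : IsCorrect y h i₀)
    (hmax : ∀ i, s i ≤ s i₀) : rsLoss C s y h ≤ 2 * logb 2 (C + 1) := by
  have hcard := inv_card_le_softmax s hmax
  rw [Fintype.card_option, Fintype.card_fin] at hcard
  have hlog := logb_le_logb_of_le one_lt_two (by positivity) hcard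
  push_cast at hlog
  rw [logb_inv] at hlog
  linarith [rsLoss_le_neg_two_logb_softmax (s := s) hi₀]

lemma tendsto_rsLoss_smul_atTop {i₀ : Option (Fin C)} (hi₀ : IsCorrect y h i₀)
    (hmax : ∀ i ≠ i₀, s i < s i₀) :
    Tendsto (fun t : ℝ => rsLoss C (t • s) y h) atTop (𝓝 0) := by
  have hlog : Tendsto (fun t : ℝ => -2 * logb 2 (softmax (t • s) i₀)) atTop (𝓝 0) := by
    simpa using ((continuousAt_logb one_ne_zero).tendsto.comp
      (tendsto_softmax_smul_atTop s hmax)).const_mul (-2)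
  exact squeeze_zero (fun t => rsLoss_nonneg _ y h)
    (fun t => rsLoss_le_neg_two_logb_softmax hi₀) hlog

lemma exists_isCorrect_strictMax
    (hsep : ((∀ j : Fin C, s (some j) < s none) ∧ h = y) ∨
      (∀ i : Option (Fin C), i ≠ some y → s i < s (some y))) :
    ∃ i₀, IsCorrect y h i₀ ∧ ∀ i ≠ i₀, s i < s i₀ := by
  rcases hsep with ⟨hlt, hhy⟩ | hlt
  · refine ⟨none, hhy, ?_⟩
    rintro (_ | j) hj
    · exact absurd rfl hj
    · exact hlt j
  · exact ⟨some y, rfl, hlt⟩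

end Surrogate

lemma tendsto_integral_rsLoss_natCast_smul {Ω : Type*} [MeasurableSpace Ω] {μ : Measure Ω}
    [IsFiniteMeasure μ] {C : ℕ} (S : Ω → Option (Fin C) → ℝ) (Y H : Ω → Fin C)
    (hmeas : ∀ n : ℕ, AEStronglyMeasurable (fun ω => rsLoss C ((n : ℝ) • S ω) (Y ω) (H ω)) μ)
    (hsep : ∀ᵐ ω ∂μ, ∃ i₀, IsCorrect (Y ω) (H ω) i₀ ∧ ∀ i ≠ i₀, S ω i < S ω i₀) :
    Tendsto (fun n : ℕ => ∫ ω, rsLoss C ((n : ℝ) • S ω) (Y ω) (H ω) ∂μ) atTop (𝓝 0) := by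
  rw [← integral_zero Ω ℝ]
  refine tendsto_integral_of_dominated_convergence (fun _ => 2 * logb 2 (C + 1)) hmeas
    (integrable_const _) (fun n => ?_) ?_
  · filter_upwards [hsep] with ω ⟨i₀, hi₀, hmax⟩
    have hmax' : ∀ i, ((n : ℝ) • S ω) i ≤ ((n : ℝ) • S ω) i₀ := fun i => by
      rcases eq_or_ne i i₀ with rfl | hi
      · rfl
      · exact mul_le_mul_of_nonneg_left (hmax i hi).le n.cast_nonneg
    rw [norm_of_nonneg (rsLoss_nonneg _ _ _)]
    exact rsLoss_le_two_logb hi₀ hmax'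
  · filter_upwards [hsep] with ω ⟨i₀, hi₀, hmax⟩
    exact (tendsto_rsLoss_smul_atTop hi₀ hmax).comp tendsto_natCast_atTop_atTop

/-- Realizable consistency of the RealizableSurrogate: if the class G of scoring functions
is closed under nonnegative scaling, contains a scoring function g* with zero population
0-1 deferral loss and strict score separation a.s., and the expected surrogate losses are
defined, then any minimizer of the expected surrogate over G induces a classifier-rejector
pair with zero population 0-1 deferral loss. -/
theorem stmt11 {𝒳 Ω : Type*} [MeasurableSpace Ω] (μ : Measure Ω)
    [IsProbabilityMeasure μ] (C : ℕ)
    (X : Ω → 𝒳) (Y H : Ω → Fin C)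
    (G : Set (𝒳 → Option (Fin C) → ℝ))
    (hscale : ∀ g ∈ G, ∀ α : ℝ, 0 ≤ α → (fun x i => α * g x i) ∈ G)
    (hint : ∀ g ∈ G, Integrable (fun ω => rsLoss C (g (X ω)) (Y ω) (H ω)) μ)
    (gstar : 𝒳 → Option (Fin C) → ℝ) (hgstar : gstar ∈ G)
    (hsep : ∀ᵐ ω ∂μ,
      ((∀ j : Fin C, gstar (X ω) (some j) < gstar (X ω) none) ∧ H ω = Y ω) ∨
      (∀ i : Option (Fin C), i ≠ some (Y ω) → gstar (X ω) i < gstar (X ω) (some (Y ω))))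
    (ghat : 𝒳 → Option (Fin C) → ℝ) (hghat : ghat ∈ G)
    (hmin : ∀ g ∈ G, ∫ ω, rsLoss C (ghat (X ω)) (Y ω) (H ω) ∂μ
      ≤ ∫ ω, rsLoss C (g (X ω)) (Y ω) (H ω) ∂μ)
    (mhat : 𝒳 → Fin C) (hmhat : ∀ x j, ghat x (some j) ≤ ghat x (some (mhat x))) :
    ∫ ω, zeroOneDefLoss C (ghat (X ω)) (mhat (X ω)) (Y ω) (H ω) ∂μ = 0 := by
  have hscaled : ∀ n : ℕ, (fun x i => (n : ℝ) * gstar x i) ∈ G := fun n =>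
    hscale gstar hgstar n n.cast_nonneg
  have hlim := tendsto_integral_rsLoss_natCast_smul (μ := μ) (fun ω => gstar (X ω)) Y H
    (fun n => (hint _ (hscaled n)).aestronglyMeasurable)
    (hsep.mono fun ω => exists_isCorrect_strictMax)
  have hsurrogate : ∫ ω, rsLoss C (ghat (X ω)) (Y ω) (H ω) ∂μ ≤ 0 :=
    ge_of_tendsto' hlim fun n => hmin _ (hscaled n)
  have hnonneg : ∀ ω, 0 ≤ zeroOneDefLoss C (ghat (X ω)) (mhat (X ω)) (Y ω) (H ω) := fun ω =>
    zeroOneDefLoss_nonneg _ _ _ _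
  refine le_antisymm ?_ (integral_nonneg hnonneg)
  calc ∫ ω, zeroOneDefLoss C (ghat (X ω)) (mhat (X ω)) (Y ω) (H ω) ∂μ
      ≤ ∫ ω, rsLoss C (ghat (X ω)) (Y ω) (H ω) ∂μ :=
        integral_mono_of_nonneg (ae_of_all _ hnonneg) (hint ghat hghat)
          (ae_of_all _ fun ω => zeroOneDefLoss_le_rsLoss _ _ _ _ (hmhat (X ω)))
    _ ≤ 0 := hsurrogate
end
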